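/- There exists a super-simple (5,2)-DGDD of group type 4⁶ (six groups each of size 4, so 24 points) with d ≥ 1/2. -/

import Mathlib

/-- A block collection is super-simple if any two of its blocks (counted with
multiplicity) share at most two points. -/
def SuperSimple (v : ℕ) (B : Multiset (List (Fin v))) : Prop :=
  ∀ b₁ b₂ : List (Fin v), ({b₁, b₂} : Multiset (List (Fin v))) ≤ B →
    (b₁.toFinset ∩ b₂.toFinset).card ≤ 2

/-- `(Fin v, G, B)` is a `(k,λ)` directed group divisible design (DGDD):
`G` partitions the point set into groups, every block is an ordered `k`-tuple
of distinct points meeting each group in at most one point, and every ordered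
pair of points from distinct groups appears (in order) in exactly `lam` blocks. -/
def IsDGDD (v k lam : ℕ) (G : Finset (Finset (Fin v)))
    (B : Multiset (List (Fin v))) : Prop :=
  (∀ x : Fin v, ∃! g, g ∈ G ∧ x ∈ g) ∧
  (∀ b ∈ B, b.length = k ∧ b.Nodup ∧
    ∀ g ∈ G, ∀ x ∈ b, ∀ y ∈ b, x ∈ g → y ∈ g → x = y) ∧
  ∀ x y : Fin v, (∀ g ∈ G, ¬(x ∈ g ∧ y ∈ g)) →
    Multiset.countP (fun b => [x, y].Sublist b) B = lam

/-- `S` is a defining set of the `(k,λ)`-DGDD `(Fin v, G, B)`: it is a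
subcollection of `B`, and `B` is the unique `(k,λ)`-DGDD with the same point
set and group set whose block collection contains `S`. -/
def IsDGDDDefiningSet (v k lam : ℕ) (G : Finset (Finset (Fin v)))
    (B S : Multiset (List (Fin v))) : Prop :=
  S ≤ B ∧ ∀ B' : Multiset (List (Fin v)),
    IsDGDD v k lam G B' → S ≤ B' → B' = B

/-- `d ≥ 1/2` for a DGDD: every defining set (in particular a smallest one)
contains at least half of the blocks. -/
def DGDDDefiningSetsAtLeastHalf (v k lam : ℕ) (G : Finset (Finset (Fin v)))
    (B : Multiset (List (Fin v))) : Prop :=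
  ∀ S : Multiset (List (Fin v)), IsDGDDDefiningSet v k lam G B S →
    Multiset.card B ≤ 2 * Multiset.card S

/-- There exists a super-simple `(k,λ)`-DGDD whose group type (the multiset of
group sizes) is `T`, with `d ≥ 1/2`. -/
def ExistsSuperSimpleDGDDHalf (k lam : ℕ) (T : Multiset ℕ) : Prop :=
  ∃ (v : ℕ) (G : Finset (Finset (Fin v))) (B : Multiset (List (Fin v))),
    IsDGDD v k lam G B ∧ SuperSimple v B ∧
    Multiset.map Finset.card G.val = T ∧
    DGDDDefiningSetsAtLeastHalf v k lam G B

/-!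
The design lives on `ℤ₂₄` with the residue classes mod `6` as groups, and its `96` blocks are the
translates of four base blocks. They come in `48` *trade pairs* `(x y t…, y x s…)`: exchanging the
first two points of both blocks of a pair moves the ordered pair `(x, y)` from the first block to
the second and `(y, x)` the other way, so every ordered pair is still covered twice. The swapped
blocks are not blocks of the design, so a defining set must contain a block of every trade pair,
hence at least half of the blocks.
-/

abbrev Trade (α : Type*) := α × α × List α × List α

section Trades

variable {α : Type*}

theorem List.pair_sublist_cons_iff (p q a : α) (l : List α) :
    [p, q].Sublist (a :: l) ↔ (p = a ∧ q ∈ l) ∨ [p, q].Sublist l := by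
  rw [List.sublist_cons_iff]
  simp [or_comm, eq_comm]

theorem List.pair_sublist_cons_cons_iff (p q x y : α) (t : List α) :
    [p, q].Sublist (x :: y :: t) ↔
      (p = x ∧ q = y) ∨ ((p = x ∨ p = y) ∧ q ∈ t) ∨ [p, q].Sublist t := by
  simp only [List.pair_sublist_cons_iff, List.mem_cons]
  tauto

theorem Multiset.countP_pair_sublist_swap [DecidableEq α] {p q x y : α} {t s : List α}
    (R : Multiset (List α)) (hb : (x :: y :: t).Nodup) (hc : (y :: x :: s).Nodup) :
    countP (fun b => [p, q].Sublist b) ((y :: x :: t) ::ₘ (x :: y :: s) ::ₘ R) =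
      countP (fun b => [p, q].Sublist b) ((x :: y :: t) ::ₘ (y :: x :: s) ::ₘ R) := by
  simp only [List.nodup_cons, List.mem_cons, not_or] at hb hc
  have ht : [p, q].Sublist t → q ∈ t := fun h => h.subset (by simp)
  have hs : [p, q].Sublist s → q ∈ s := fun h => h.subset (by simp)
  simp only [countP_cons, List.pair_sublist_cons_cons_iff]
  split_ifs <;> grind

theorem List.length_le_card_of_forall_exists_mem [DecidableEq α] (L : List (List α))
    (hL : L.flatten.Nodup) (S : Multiset α) (hS : ∀ l ∈ L, ∃ a ∈ l, a ∈ S) :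
    L.length ≤ Multiset.card S := by
  induction L generalizing S with
  | nil => simp
  | cons l L ih =>
    obtain ⟨a, hal, haS⟩ := hS l (by simp)
    rw [List.flatten_cons, List.nodup_append] at hL
    have hrest : ∀ l' ∈ L, ∃ b ∈ l', b ∈ S.erase a := by
      intro l' hl'
      obtain ⟨b, hbl', hbS⟩ := hS l' (by simp [hl'])
      have hba : b ≠ a := (hL.2.2 a hal b (List.mem_flatten.mpr ⟨l', hl', hbl'⟩)).symm
      exact ⟨b, hbl', (Multiset.mem_erase_of_ne hba).mpr hbS⟩
    have := ih hL.2.1 (S.erase a) hrest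
    rw [List.length_cons, ← Multiset.card_erase_add_one haS]
    omega

def tradePair : Trade α → List (List α)
  | (x, y, t, s) => [x :: y :: t, y :: x :: s]

def tradeBlocks (T : List (Trade α)) : List (List α) :=
  (T.map tradePair).flatten

theorem length_tradeBlocks (T : List (Trade α)) :
    (tradeBlocks T).length = 2 * T.length := by
  induction T with
  | nil => rfl
  | cons τ T ih => simp [tradeBlocks, tradePair] at ih ⊢; omega

theorem exists_coe_tradeBlocks_eq_cons_cons {T : List (Trade α)} {x y : α}
    {t s : List α} (h : (x, y, t, s) ∈ T) :
    ∃ R, (tradeBlocks T : Multiset (List α)) = (x :: y :: t) ::ₘ (y :: x :: s) ::ₘ R := by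
  obtain ⟨T₁, T₂, rfl⟩ := List.append_of_mem h
  refine ⟨tradeBlocks T₁ ++ tradeBlocks T₂, ?_⟩
  simp only [tradeBlocks, tradePair, List.map_append, List.map_cons, List.flatten_append,
    List.flatten_cons, List.cons_append, List.nil_append, Multiset.cons_coe, Multiset.coe_eq_coe]
  exact List.perm_middle.trans (List.perm_middle.cons _)

end Trades

section DGDD

variable {v k lam : ℕ} {G : Finset (Finset (Fin v))}

theorem IsDGDD.swap_trade {x y : Fin v} {t s : List (Fin v)} {R : Multiset (List (Fin v))}
    (h : IsDGDD v k lam G ((x :: y :: t) ::ₘ (y :: x :: s) ::ₘ R)) :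
    IsDGDD v k lam G ((y :: x :: t) ::ₘ (x :: y :: s) ::ₘ R) := by
  obtain ⟨hG, hblocks, hpairs⟩ := h
  have hb := hblocks _ (Multiset.mem_cons_self _ _)
  have hc := hblocks _ (Multiset.mem_cons_of_mem (Multiset.mem_cons_self _ _))
  refine ⟨hG, ?_, fun p q hpq => ?_⟩
  · intro b hb'
    obtain ⟨b₀, hb₀, hperm⟩ :
        ∃ b₀ ∈ (x :: y :: t) ::ₘ (y :: x :: s) ::ₘ R, b.Perm b₀ := by
      simp only [Multiset.mem_cons] at hb'
      rcases hb' with rfl | rfl | hbR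
      · exact ⟨_, Multiset.mem_cons_self _ _, List.Perm.swap x y t⟩
      · exact ⟨_, Multiset.mem_cons_of_mem (Multiset.mem_cons_self _ _), List.Perm.swap y x s⟩
      · exact ⟨b, by simp [hbR], List.Perm.refl b⟩
    obtain ⟨hlen, hnd, hgrp⟩ := hblocks b₀ hb₀
    refine ⟨hperm.length_eq.trans hlen, hperm.nodup_iff.mpr hnd, ?_⟩
    intro g hg a ha c hc' hag hcg
    exact hgrp g hg a (hperm.mem_iff.mp ha) c (hperm.mem_iff.mp hc') hag hcg
  · rw [Multiset.countP_pair_sublist_swap R hb.2.1 hc.2.1]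
    exact hpairs p q hpq

theorem IsDGDDDefiningSet.mem_or_mem_of_trade {B S R : Multiset (List (Fin v))} {x y : Fin v}
    {t s : List (Fin v)} (hS : IsDGDDDefiningSet v k lam G B S) (hB : IsDGDD v k lam G B)
    (hBR : B = (x :: y :: t) ::ₘ (y :: x :: s) ::ₘ R) (hnew : y :: x :: t ∉ B) :
    x :: y :: t ∈ S ∨ y :: x :: s ∈ S := by
  subst hBR
  by_contra! hnot
  have hSR : S ≤ R := by
    rw [← Multiset.le_cons_of_notMem hnot.2, ← Multiset.le_cons_of_notMem hnot.1]
    exact hS.1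
  have hSB' : S ≤ (y :: x :: t) ::ₘ (x :: y :: s) ::ₘ R :=
    hSR.trans ((Multiset.le_cons_self _ _).trans (Multiset.le_cons_self _ _))
  rw [← hS.2 _ hB.swap_trade hSB'] at hnew
  exact hnew (Multiset.mem_cons_self _ _)

theorem dgddDefiningSetsAtLeastHalf_tradeBlocks
    {T : List (Trade (Fin v))} (hB : IsDGDD v k lam G (tradeBlocks T))
    (hnd : (tradeBlocks T).Nodup)
    (hnew : ∀ x y t s, (x, y, t, s) ∈ T → y :: x :: t ∉ tradeBlocks T) :
    DGDDDefiningSetsAtLeastHalf v k lam G (tradeBlocks T) := by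
  intro S hS
  have hmeet : ∀ l ∈ T.map tradePair, ∃ b ∈ l, b ∈ S := by
    simp only [List.mem_map, forall_exists_index, and_imp, Prod.forall]
    rintro _ x y t s hmem rfl
    obtain ⟨R, hBR⟩ := exists_coe_tradeBlocks_eq_cons_cons hmem
    have hnew' : y :: x :: t ∉ (tradeBlocks T : Multiset (List (Fin v))) :=
      Multiset.mem_coe.not.mpr (hnew x y t s hmem)
    rcases hS.mem_or_mem_of_trade hB hBR hnew' with h | h <;>
      exact ⟨_, by simp [tradePair], h⟩
  have := List.length_le_card_of_forall_exists_mem _ hnd S hmeet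
  rw [Multiset.coe_card, length_tradeBlocks]
  simpa using this

end DGDD

def residueClasses (v n : ℕ) : Finset (Finset (Fin v)) :=
  (Finset.range n).image fun j => Finset.univ.filter fun x : Fin v => x.val % n = j

section ResidueClasses

variable {v n : ℕ}

theorem mem_residueClasses {g : Finset (Fin v)} :
    g ∈ residueClasses v n ↔
      ∃ j < n, Finset.univ.filter (fun x : Fin v => x.val % n = j) = g := by
  simp [residueClasses]

theorem mod_eq_of_mem_residueClasses {g : Finset (Fin v)} {x y : Fin v}
    (hg : g ∈ residueClasses v n) (hx : x ∈ g) (hy : y ∈ g) : x.val % n = y.val % n := by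
  obtain ⟨j, -, rfl⟩ := mem_residueClasses.mp hg
  simp only [Finset.mem_filter, Finset.mem_univ, true_and] at hx hy
  rw [hx, hy]

theorem exists_mem_residueClasses_of_mod_eq (hn : 0 < n) {x y : Fin v}
    (h : x.val % n = y.val % n) : ∃ g ∈ residueClasses v n, x ∈ g ∧ y ∈ g :=
  ⟨_, mem_residueClasses.mpr ⟨x.val % n, Nat.mod_lt _ hn, rfl⟩, by simp, by simp [h]⟩

theorem isDGDD_residueClasses {k lam : ℕ} (hn : 0 < n) (l : List (List (Fin v)))
    (hblocks : ∀ b ∈ l, b.length = k ∧ b.Nodup ∧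
      ∀ x ∈ b, ∀ y ∈ b, x.val % n = y.val % n → x = y)
    (hpairs : ∀ x y : Fin v, x.val % n ≠ y.val % n →
      l.countP (fun b => [x, y].Sublist b) = lam) :
    IsDGDD v k lam (residueClasses v n) l := by
  refine ⟨fun x => ?_, fun b hb => ?_, fun x y hxy => ?_⟩
  · obtain ⟨g, hg, hx, -⟩ := exists_mem_residueClasses_of_mod_eq (y := x) hn rfl
    refine ⟨g, ⟨hg, hx⟩, fun g' ⟨hg', hx'⟩ => ?_⟩
    obtain ⟨j, -, rfl⟩ := mem_residueClasses.mp hg'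
    obtain ⟨j', -, rfl⟩ := mem_residueClasses.mp hg
    simp only [Finset.mem_filter, Finset.mem_univ, true_and] at hx hx'
    rw [← hx, ← hx']
  · obtain ⟨hlen, hnd, hgrp⟩ := hblocks b (Multiset.mem_coe.mp hb)
    exact ⟨hlen, hnd, fun g hg x hx y hy hxg hyg =>
      hgrp x hx y hy (mod_eq_of_mem_residueClasses hg hxg hyg)⟩
  · rw [Multiset.coe_countP]
    refine hpairs x y fun h => ?_
    obtain ⟨g, hg, hxy'⟩ := exists_mem_residueClasses_of_mod_eq hn h
    exact hxy g hg hxy'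

end ResidueClasses

theorem superSimple_coe {v : ℕ} {l : List (List (Fin v))} (hnd : l.Nodup)
    (hl : l.Pairwise fun b c => (b.toFinset ∩ c.toFinset).card ≤ 2) : SuperSimple v l := by
  intro b₁ b₂ hle
  by_cases heq : b₁ = b₂
  · subst heq
    exact absurd hle (Multiset.nodup_iff_le.mp (Multiset.coe_nodup.mpr hnd) b₁)
  · have : Std.Symm fun b c : List (Fin v) => (b.toFinset ∩ c.toFinset).card ≤ 2 :=
      ⟨fun b c h => by rwa [Finset.inter_comm]⟩
    exact hl.forall (Multiset.mem_coe.mp (Multiset.mem_of_le hle (by simp)))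
      (Multiset.mem_coe.mp (Multiset.mem_of_le hle (by simp))) heq

def translateTrade {n : ℕ} [NeZero n] (i : Fin n) : Trade (Fin n) → Trade (Fin n)
  | (x, y, t, s) => (x + i, y + i, t.map (· + i), s.map (· + i))

def baseTrades : List (Trade (Fin 24)) :=
  [(0, 11, [20, 10, 13], [3, 4, 8]), (0, 1, [20, 15, 22], [11, 9, 16])]

def trades : List (Trade (Fin 24)) :=
  (List.finRange 24).flatMap fun i => baseTrades.map (translateTrade i)

theorem tradeBlocks_trades_wellFormed : ∀ b ∈ tradeBlocks trades, b.length = 5 ∧ b.Nodup ∧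
    ∀ x ∈ b, ∀ y ∈ b, x.val % 6 = y.val % 6 → x = y := by
  decide +kernel

theorem countP_tradeBlocks_trades : ∀ x y : Fin 24, x.val % 6 ≠ y.val % 6 →
    (tradeBlocks trades).countP (fun b => [x, y].Sublist b) = 2 := by
  decide +kernel

theorem nodup_tradeBlocks_trades : (tradeBlocks trades).Nodup := by
  decide +kernel

theorem pairwise_card_inter_tradeBlocks_trades :
    (tradeBlocks trades).Pairwise fun b c => (b.toFinset ∩ c.toFinset).card ≤ 2 := by
  decide +kernel

theorem swap_not_mem_tradeBlocks_trades :
    ∀ τ ∈ trades, τ.2.1 :: τ.1 :: τ.2.2.1 ∉ tradeBlocks trades := by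
  decide +kernel

theorem card_residueClasses_24_6 :
    Multiset.map Finset.card (residueClasses 24 6).val = Multiset.replicate 6 4 := by
  decide +kernel

/-- There exists a super-simple `(5,2)`-DGDD of group type `4⁶`
(six groups each of size `4`) with `d ≥ 1/2`. -/
theorem exists_superSimple_DGDD_type_4_6 :
    ExistsSuperSimpleDGDDHalf 5 2 (Multiset.replicate 6 4) := by
  have hdgdd : IsDGDD 24 5 2 (residueClasses 24 6) (tradeBlocks trades) :=
    isDGDD_residueClasses (by norm_num) _ tradeBlocks_trades_wellFormed countP_tradeBlocks_trades
  exact ⟨24, residueClasses 24 6, tradeBlocks trades, hdgdd,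
    superSimple_coe nodup_tradeBlocks_trades pairwise_card_inter_tradeBlocks_trades,
    card_residueClasses_24_6,
    dgddDefiningSetsAtLeastHalf_tradeBlocks hdgdd nodup_tradeBlocks_trades
      fun x y t s h => swap_not_mem_tradeBlocks_trades _ h⟩
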